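/- For α ∈ ℕ, α ≥ 1, n ≥ 1, and 0 ≤ i, j ≤ n with i ≥ j, let R^{(α)}(n;i,j) = (-1)^{n(α+i+j) - binom(i,2) - binom(j,2)} F_{α+i+j} binom(α+n+i, n-j)_F binom(α+n+j, n-i)_F binom(α+i+j-1, i)_F binom(α+i+j-1, j)_F, and let C^{(α)}(k;i,j) = (-1)^{k(α+i+j) - binom(i,2) - binom(j,2)} F_{α+2k} binom(k,i)_F binom(k,j)_F binom(α+k+i-1, k)_F binom(α+k+j-1, k)_F. Then R^{(α)}(n+1;i,j) - R^{(α)}(n;i,j) = C^{(α)}(n+1;i,j). -/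

import Mathlib

/-
With `s = α + i + j`, `h = n + 1 - j` and `k = n + 1 - i`, passing from `n` to `n + 1`
multiplies `R(n;i,j)` by `(-1)^s F_{s+h} F_{s+k} / (F_h F_k)`, while writing Fibonomial
coefficients as quotients of Fibonacci factorials `F_1 ⋯ F_m` (a multinomial identity) gives
`F_h F_k C(n+1;i,j) = (-1)^s F_{α+2(n+1)} F_s R(n;i,j)`. Since `s + h + k = α + 2(n+1)`, the claim
reduces to Vajda's identity `F_{s+h} F_{s+k} - F_s F_{s+h+k} = (-1)^s F_h F_k`.
-/

/-- The Fibonomial coefficient `∏_{i=1}^k F_{m-i+1}/F_i`, as a real number. -/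
noncomputable def fibinom (m k : ℕ) : ℝ :=
  ∏ j ∈ Finset.range k, (Nat.fib (m - j) : ℝ) / (Nat.fib (j + 1) : ℝ)

/-- `R^{(α)}(n;i,j)`, the claimed inverse-matrix entry. -/
noncomputable def Rfib (α n i j : ℕ) : ℝ :=
  (-1 : ℝ) ^ (n * (α + i + j) - Nat.choose i 2 - Nat.choose j 2) *
    (Nat.fib (α + i + j) : ℝ) * fibinom (α + n + i) (n - j) * fibinom (α + n + j) (n - i) *
    fibinom (α + i + j - 1) i * fibinom (α + i + j - 1) j

/-- `C^{(α)}(k;i,j)`, the summand of the kernel polynomial coefficient. -/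
noncomputable def Cfib (α k i j : ℕ) : ℝ :=
  (-1 : ℝ) ^ (k * (α + i + j) - Nat.choose i 2 - Nat.choose j 2) *
    (Nat.fib (α + 2 * k) : ℝ) * fibinom k i * fibinom k j *
    fibinom (α + k + i - 1) k * fibinom (α + k + j - 1) k

theorem Int.fib_add_mul_fib_add_sub_fib_mul_fib_add_add (m h k : ℤ) :
    fib (m + h) * fib (m + k) - fib m * fib (m + h + k) = (-1) ^ m.natAbs * fib h * fib k := by
  have hm : fib (m + 1) = fib (m - 1) + fib m := by
    rw [show m + 1 = m - 1 + 2 by ring, fib_add_two, sub_add_cancel]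
  have hh : fib (h + 1) = fib (h - 1) + fib h := by
    rw [show h + 1 = h - 1 + 2 by ring, fib_add_two, sub_add_cancel]
  rw [fib_add m h, fib_add m k, add_assoc, fib_add m (h + k), fib_add h k,
    show h + k + 1 = (h + 1) + k by ring, fib_add (h + 1) k, add_sub_cancel_right,
    ← fib_succ_mul_fib_pred_sub_fib_sq m]
  linear_combination (fib (m - 1) * fib m * fib k) * hh - (fib h * fib k * fib (m - 1)) * hm

theorem Nat.fib_add_mul_fib_add_sub_fib_mul_fib_add_add {R : Type*} [CommRing R] (m h k : ℕ) :
    (fib (m + h) : R) * fib (m + k) - fib m * fib (m + h + k) = (-1) ^ m * fib h * fib k := by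
  have := congrArg (Int.cast : ℤ → R) (Int.fib_add_mul_fib_add_sub_fib_mul_fib_add_add m h k)
  simp only [← Nat.cast_add, Int.fib_natCast, Int.natAbs_natCast] at this
  exact_mod_cast this

open Nat Finset

lemma fib_succ_cast_ne_zero (n : ℕ) : (fib (n + 1) : ℝ) ≠ 0 := by
  exact_mod_cast (fib_pos.mpr n.succ_pos).ne'

noncomputable def fibFactorial (n : ℕ) : ℝ :=
  ∏ t ∈ range n, (fib (t + 1) : ℝ)

lemma fibFactorial_succ (n : ℕ) : fibFactorial (n + 1) = fib (n + 1) * fibFactorial n := by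
  rw [fibFactorial, prod_range_succ, mul_comm]; rfl

lemma fibFactorial_ne_zero (n : ℕ) : fibFactorial n ≠ 0 :=
  prod_ne_zero_iff.mpr fun t _ => fib_succ_cast_ne_zero t

lemma fibinom_succ_succ (m k : ℕ) :
    fibinom (m + 1) (k + 1) = fib (m + 1) / fib (k + 1) * fibinom m k := by
  simp only [fibinom, prod_div_distrib]
  rw [prod_range_succ' (fun j => (fib (m + 1 - j) : ℝ)), prod_range_succ]
  simp only [Nat.add_sub_add_right, Nat.sub_zero]
  ring

lemma fibinom_eq_div {k l m : ℕ} (h : k + l = m) :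
    fibinom m k = fibFactorial m / (fibFactorial k * fibFactorial l) := by
  subst h
  induction k with
  | zero =>
    simp only [fibinom, prod_range_zero, zero_add]
    rw [show fibFactorial 0 = 1 from prod_range_zero _, one_mul, div_self (fibFactorial_ne_zero l)]
  | succ k ih =>
    rw [show k + 1 + l = k + l + 1 by ring, fibinom_succ_succ, ih, fibFactorial_succ,
      fibFactorial_succ]
    field_simp [fibFactorial_ne_zero, fib_succ_cast_ne_zero]

lemma fib_mul_fibinom_mul_fibinom (a b c : ℕ) :
    (fib (b + c + 1) : ℝ) * fibinom (a + b + c + 1) a * fibinom (b + c) b =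
      fib (a + 1) * fibinom (a + b + 1) b * fibinom (a + b + c + 1) (a + b + 1) := by
  rw [fibinom_eq_div (show a + (b + c + 1) = a + b + c + 1 by ring),
    fibinom_eq_div (show b + c = b + c from rfl),
    fibinom_eq_div (show b + (a + 1) = a + b + 1 by ring),
    fibinom_eq_div (show a + b + 1 + c = a + b + c + 1 by ring),
    fibFactorial_succ (b + c), fibFactorial_succ a]
  field_simp [fibFactorial_ne_zero, fib_succ_cast_ne_zero]

lemma choose_two_le_mul {i n : ℕ} (h : i ≤ n) : i.choose 2 ≤ n * i := by
  rw [choose_two_right, mul_comm n]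
  exact (Nat.div_le_self _ _).trans (Nat.mul_le_mul_left i (by omega))

lemma succ_mul_sub_choose_two_sub_choose_two {n i j s : ℕ} (hi : i ≤ n) (hj : j ≤ n)
    (hs : i + j ≤ s) :
    (n + 1) * s - i.choose 2 - j.choose 2 = n * s - i.choose 2 - j.choose 2 + s := by
  have := choose_two_le_mul hi
  have := choose_two_le_mul hj
  have : n * i + n * j ≤ n * s := by rw [← mul_add]; exact Nat.mul_le_mul_left n hs
  rw [succ_mul]
  omega

lemma Rfib_succ {α n i j : ℕ} (hi : i ≤ n) (hj : j ≤ n) :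
    Rfib α (n + 1) i j = (-1) ^ (α + i + j) * (fib (α + n + i + 1) / fib (n - j + 1)) *
      (fib (α + n + j + 1) / fib (n - i + 1)) * Rfib α n i j := by
  rw [Rfib, Rfib, succ_mul_sub_choose_two_sub_choose_two hi hj (by omega), pow_add,
    show α + (n + 1) + i = α + n + i + 1 by ring, show α + (n + 1) + j = α + n + j + 1 by ring,
    show n + 1 - j = n - j + 1 by omega, show n + 1 - i = n - i + 1 by omega,
    fibinom_succ_succ, fibinom_succ_succ]
  ring

lemma fib_mul_fib_mul_Cfib_succ {α n i j : ℕ} (hα : 1 ≤ α) (hi : i ≤ n) (hj : j ≤ n) :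
    fib (n - j + 1) * fib (n - i + 1) * Cfib α (n + 1) i j =
      (-1) ^ (α + i + j) * fib (α + 2 * (n + 1)) * fib (α + i + j) * Rfib α n i j := by
  have hI : (fib (α + i + j) : ℝ) * fibinom (α + n + i) (n - j) * fibinom (α + i + j - 1) j =
      fib (n - j + 1) * fibinom (n + 1) j * fibinom (α + n + i) (n + 1) := by
    have h := fib_mul_fibinom_mul_fibinom (n - j) j (α + i - 1)
    rwa [show n - j + j + (α + i - 1) + 1 = α + n + i by omega,
      show j + (α + i - 1) + 1 = α + i + j by omega,
      show j + (α + i - 1) = α + i + j - 1 by omega,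
      show n - j + j + 1 = n + 1 by omega] at h
  have hJ : (fib (α + i + j) : ℝ) * fibinom (α + n + j) (n - i) * fibinom (α + i + j - 1) i =
      fib (n - i + 1) * fibinom (n + 1) i * fibinom (α + n + j) (n + 1) := by
    have h := fib_mul_fibinom_mul_fibinom (n - i) i (α + j - 1)
    rwa [show n - i + i + (α + j - 1) + 1 = α + n + j by omega,
      show i + (α + j - 1) + 1 = α + i + j by omega,
      show i + (α + j - 1) = α + i + j - 1 by omega,
      show n - i + i + 1 = n + 1 by omega] at h
  rw [Cfib, Rfib, succ_mul_sub_choose_two_sub_choose_two hi hj (by omega), pow_add,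
    show α + (n + 1) + i - 1 = α + n + i by omega,
    show α + (n + 1) + j - 1 = α + n + j by omega]
  generalize (-1 : ℝ) ^ (n * (α + i + j) - i.choose 2 - j.choose 2) = ε
  generalize (-1 : ℝ) ^ (α + i + j) = σ
  linear_combination (-ε * σ * fib (α + 2 * (n + 1))) *
    (fib (n - i + 1) * fibinom (n + 1) i * fibinom (α + n + j) (n + 1) * hI +
      fib (α + i + j) * fibinom (α + n + i) (n - j) * fibinom (α + i + j - 1) j * hJ)

theorem fib_induction_step_general (α n i j : ℕ) (hα : 1 ≤ α)
    (hij : j ≤ i) (hi : i ≤ n) :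
    Rfib α (n + 1) i j - Rfib α n i j = Cfib α (n + 1) i j := by
  have hj : j ≤ n := hij.trans hi
  have hv :=
    fib_add_mul_fib_add_sub_fib_mul_fib_add_add (R := ℝ) (α + i + j) (n - j + 1) (n - i + 1)
  rw [show α + i + j + (n - j + 1) + (n - i + 1) = α + 2 * (n + 1) by omega,
    show α + i + j + (n - j + 1) = α + n + i + 1 by omega,
    show α + i + j + (n - i + 1) = α + n + j + 1 by omega] at hv
  have hσ : ((-1 : ℝ) ^ (α + i + j)) ^ 2 = 1 := by
    rw [← pow_mul, pow_mul', neg_one_sq, one_pow]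
  have hFi := fib_succ_cast_ne_zero (n - i)
  have hFj := fib_succ_cast_ne_zero (n - j)
  apply mul_left_cancel₀ (mul_ne_zero hFj hFi)
  rw [fib_mul_fib_mul_Cfib_succ hα hi hj, Rfib_succ hi hj]
  field_simp
  linear_combination (-1) ^ (α + i + j) * Rfib α n i j * hv +
    Rfib α n i j * fib (n - j + 1) * fib (n - i + 1) * hσ

theorem fib_induction_step (α n i j : ℕ) (hα : 1 ≤ α) (hn : 1 ≤ n)
    (hij : j ≤ i) (hi : i ≤ n) :
    Rfib α (n + 1) i j - Rfib α n i j = Cfib α (n + 1) i j :=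
  fib_induction_step_general α n i j hα hij hi
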